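/- arXiv:2104.10657 — 7 statements merged into one kernel-verified Lean document; each statement's English description precedes it below -/
import Mathlib

section
/- Fix any real λ > 1 and τ > φ(λ), and any integer N ≥ 2. Define φ^N(x) = τ − (N−1)·h(x; λ) for x ∈ [φ(λ), +∞). Then φ^N has a unique fixed point x(N) on [φ(λ), +∞), and this fixed point satisfies φ(λ) < x(N) < τ. -/
/-- `phi l = log (l / (l - 1))` for `l > 1`. -/
noncomputable def phi (l : ℝ) : ℝ := Real.log (l / (l - 1))

/-- `h x l = (1/l) * log ((l - 1) * (exp x - 1))`. -/
noncomputable def h (x l : ℝ) : ℝ := (1 / l) * Real.log ((l - 1) * (Real.exp x - 1))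

/-!
`x ↦ x + (N - 1) h(x; λ)` is continuous and strictly increasing on `[φ(λ), ∞)` and equals
`φ(λ) < τ` at `φ(λ)`, because `h(φ(λ); λ) = 0`. Since `N ≥ 2`, its value at `τ` exceeds `τ`, so
by the intermediate value theorem it takes the value `τ` exactly once, inside `(φ(λ), τ)`.
-/

open Set

theorem exists_unique_fixed_point_of_strictMonoOn {f : ℝ → ℝ} {a τ c : ℝ} (haτ : a < τ)
    (hcont : ContinuousOn f (Icc a τ)) (hmono : StrictMonoOn f (Ici a)) (hfa : f a = 0)
    (hc : 0 < c) :
    ∃ x : ℝ, (a < x ∧ x < τ) ∧ τ - c * f x = x ∧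
      ∀ y ∈ Ici a, τ - c * f y = y → y = x := by
  set g : ℝ → ℝ := fun x => x + c * f x
  have hg_mono : StrictMonoOn g (Ici a) := fun x hx y hy hxy =>
    add_lt_add hxy (mul_lt_mul_of_pos_left (hmono hx hy hxy) hc)
  have hga : g a = a := by simp [g, hfa]
  have hgτ : τ < g τ := by
    have : 0 < f τ := hfa ▸ hmono self_mem_Ici haτ.le haτ
    simp only [g]
    nlinarith
  have hg_cont : ContinuousOn g (Icc a τ) := continuousOn_id.add (hcont.const_smul c)
  obtain ⟨x, hx, hgx⟩ : ∃ x ∈ Ioo a τ, g x = τ :=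
    intermediate_value_Ioo haτ.le hg_cont ⟨by rwa [hga], hgτ⟩
  have hfix : ∀ y, τ - c * f y = y ↔ g y = τ := fun y => by
    simp only [g]; constructor <;> intro <;> linarith
  refine ⟨x, hx, (hfix x).2 hgx, fun y hy hy_fix => ?_⟩
  exact hg_mono.injOn hy (Ioo_subset_Icc_self.trans Icc_subset_Ici_self hx)
    (((hfix y).1 hy_fix).trans hgx.symm)

theorem exp_phi {l : ℝ} (hl : 1 < l) : Real.exp (phi l) = l / (l - 1) :=
  Real.exp_log (div_pos (by linarith) (by linarith))

theorem phi_pos {l : ℝ} (hl : 1 < l) : 0 < phi l :=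
  Real.log_pos ((one_lt_div (by linarith)).2 (by linarith))

theorem h_phi {l : ℝ} (hl : 1 < l) : h (phi l) l = 0 := by
  have : (l - 1) * (Real.exp (phi l) - 1) = 1 := by
    rw [exp_phi hl]
    field_simp [(by linarith : l - 1 ≠ 0)]
    ring
  simp [h, this]

theorem continuousOn_h {l : ℝ} (hl : l ≠ 1) : ContinuousOn (h · l) {0}ᶜ := by
  refine continuousOn_const.mul (ContinuousOn.log (by fun_prop) fun x hx => ?_)
  exact mul_ne_zero (sub_ne_zero.2 hl) (sub_ne_zero.2 (mt (Real.exp_eq_one_iff x).1 hx))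

theorem strictMonoOn_h {l : ℝ} (hl : 1 < l) : StrictMonoOn (h · l) (Ioi 0) := by
  intro x hx y _ hxy
  have hl1 : 0 < l - 1 := by linarith
  have hx_arg : 0 < (l - 1) * (Real.exp x - 1) :=
    mul_pos hl1 (by linarith [Real.one_lt_exp_iff.2 hx])
  have harg : (l - 1) * (Real.exp x - 1) < (l - 1) * (Real.exp y - 1) :=
    mul_lt_mul_of_pos_left (by linarith [Real.exp_lt_exp.2 hxy]) hl1
  exact mul_lt_mul_of_pos_left (Real.log_lt_log hx_arg harg) (by positivity)

/-- for `λ > 1`, `τ > φ(λ)` and integer `N ≥ 2`, the map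
`x ↦ τ − (N−1)·h(x; λ)` has a unique fixed point on `[φ(λ), ∞)`, which lies in `(φ(λ), τ)`. -/
theorem varphi_fixed_point {l τ : ℝ} (hl : 1 < l) (hτ : phi l < τ) (N : ℕ) (hN : 2 ≤ N) :
    ∃ x : ℝ, (phi l < x ∧ x < τ) ∧ τ - ((N : ℝ) - 1) * h x l = x ∧
      ∀ y ∈ Set.Ici (phi l), τ - ((N : ℝ) - 1) * h y l = y → y = x := by
  have hIci : Ici (phi l) ⊆ Ioi 0 := Ici_subset_Ioi.2 (phi_pos hl)
  have hcont : ContinuousOn (h · l) (Icc (phi l) τ) :=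
    (continuousOn_h hl.ne').mono fun x hx => ne_of_gt (hIci hx.1)
  have hc : (0 : ℝ) < N - 1 := by
    have : (2 : ℝ) ≤ N := by exact_mod_cast hN
    linarith
  exact exists_unique_fixed_point_of_strictMonoOn hτ hcont ((strictMonoOn_h hl).mono hIci)
    (h_phi hl) hc
end

section
/- Fix any integer N ≥ 2 and reals g_1, …, g_N ∈ (0,1). Let A_N = I_N + G_N, where G_N is the N×N matrix with zero diagonal and off-diagonal entries [G_N]_{i,j} = g_j for i ≠ j. Then det(A_N) = 1 + Σ_{s=1}^{N} (−1)^{s−1} (s−1) Σ_{S ⊆ {1,…,N}, |S| = s} Π_{k ∈ S} g_k. -/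
/-!
Write `A = diag(1 - g) + 𝟙 gᵀ`: every row of `A` is `(1 - g i) eᵢ + g`. Expanding the determinant
multilinearly in the rows, every term that takes the common row `g` twice vanishes, so
`det A = ∏ₖ (1 - g k) + ∑ⱼ g j ∏_{k ≠ j} (1 - g k)`, the `j`-th term being a diagonal determinant
with row `j` replaced by `g` (read off from the adjugate of a diagonal matrix). Expanding the
products over subsets, a set `S` contributes `(-1)^|S| (1 - |S|) ∏_{k ∈ S} g k`; grouping by
`|S|` gives the formula.
-/

open Matrix Finset

namespace Matrix

variable {n R : Type*} [Fintype n] [DecidableEq n] [CommRing R]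

theorem det_updateRow_diagonal (d v : n → R) (j : n) :
    (updateRow (diagonal d) j v).det = v j * ∏ i ∈ univ.erase j, d i := by
  rw [← det_transpose, ← updateCol_transpose, diagonal_transpose, ← cramer_apply,
    cramer_eq_adjugate_mulVec, adjugate_diagonal, mulVec_diagonal, mul_comm]

theorem det_add_eq_sum_det_ite (M M' : Matrix n n R) :
    (M + M').det = ∑ s : Finset n, (of fun i => if i ∈ s then M i else M' i).det :=
  detRowAlternating.map_add_univ M M'

theorem det_ite_replicateRow_eq_zero (M : Matrix n n R) (v : n → R) {s : Finset n}
    (hs : 1 < #s) : (of fun i => if i ∈ s then replicateRow n v i else M i).det = 0 := by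
  obtain ⟨i, hi, j, hj, hij⟩ := one_lt_card.1 hs
  exact det_zero_of_row_eq hij (funext fun k => by simp [hi, hj])

theorem det_diagonal_add_replicateRow (d v : n → R) :
    (diagonal d + replicateRow n v).det = ∏ i, d i + ∑ j, v j * ∏ i ∈ univ.erase j, d i := by
  have hsupp : univ.powersetCard 0 ∪ univ.powersetCard 1 ⊆ (univ : Finset (Finset n)) :=
    subset_univ _
  rw [add_comm, det_add_eq_sum_det_ite, ← sum_subset hsupp, sum_union]
  · simp only [powersetCard_zero, powersetCard_one, sum_singleton, sum_map]
    congr 1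
    · exact det_diagonal
    · refine sum_congr rfl fun j _ => ?_
      rw [← det_updateRow_diagonal]
      congr 1
      ext i k
      simp only [of_apply, updateRow_apply, Function.Embedding.coeFn_mk, mem_singleton]
      split_ifs <;> rfl
  · exact disjoint_left.2 fun s h0 h1 => by simp_all
  · intro s _ hs
    apply det_ite_replicateRow_eq_zero
    simp only [mem_union, mem_powersetCard_univ, not_or] at hs
    omega

end Matrix

namespace Finset

variable {ι R : Type*} [CommRing R] (g : ι → R)

theorem prod_one_sub_eq_sum_powerset (s : Finset ι) :
    ∏ i ∈ s, (1 - g i) = ∑ t ∈ s.powerset, (-1) ^ #t * ∏ i ∈ t, g i := by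
  simp_rw [sub_eq_add_neg, prod_one_add, prod_neg]

variable [DecidableEq ι] [Fintype ι]

theorem mul_prod_erase_one_sub (j : ι) :
    g j * ∏ i ∈ univ.erase j, (1 - g i) =
      ∑ t : Finset ι, if j ∈ t then (-1) ^ (#t - 1) * ∏ i ∈ t, g i else 0 := by
  have hj : j ∉ univ.erase j := notMem_erase j univ
  rw [← powerset_univ]
  conv_rhs => rw [← insert_erase (mem_univ j)]
  rw [sum_powerset_insert hj,
    sum_eq_zero fun t ht => if_neg (notMem_mono (mem_powerset.1 ht) hj), zero_add,
    prod_one_sub_eq_sum_powerset, mul_sum]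
  refine sum_congr rfl fun t ht => ?_
  have hjt : j ∉ t := notMem_mono (mem_powerset.1 ht) hj
  rw [if_pos (mem_insert_self j t), card_insert_of_notMem hjt, prod_insert hjt,
    Nat.add_sub_cancel]
  ring

theorem sum_mul_prod_erase_one_sub :
    ∑ j, g j * ∏ i ∈ univ.erase j, (1 - g i) =
      ∑ t : Finset ι, #t * ((-1) ^ (#t - 1) * ∏ i ∈ t, g i) := by
  simp_rw [mul_prod_erase_one_sub]
  rw [sum_comm]
  refine sum_congr rfl fun t _ => ?_
  rw [sum_ite_mem, univ_inter, sum_const, nsmul_eq_mul]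

theorem prod_one_sub_add_sum_mul_prod_erase_one_sub :
    ∏ i, (1 - g i) + ∑ j, g j * ∏ i ∈ univ.erase j, (1 - g i) =
      1 + ∑ s ∈ Icc 1 (Fintype.card ι), (-1 : R) ^ (s - 1) * ((s : R) - 1) *
        ∑ t ∈ univ.powersetCard s, ∏ i ∈ t, g i := by
  rw [prod_one_sub_eq_sum_powerset, sum_mul_prod_erase_one_sub, powerset_univ,
    ← sum_add_distrib, ← powerset_univ, sum_powerset, card_univ, range_eq_Ico,
    sum_eq_sum_Ico_succ_bot (Nat.succ_pos _), zero_add, Nat.succ_eq_add_one,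
    Ico_add_one_right_eq_Icc]
  congr 1
  · simp
  · refine sum_congr rfl fun s hs => ?_
    obtain ⟨k, rfl⟩ : ∃ k, s = k + 1 := ⟨s - 1, by grind⟩
    rw [mul_sum]
    refine sum_congr rfl fun t ht => ?_
    rw [(mem_powersetCard.1 ht).2]
    push_cast
    ring

end Finset

theorem det_A_formula_general (N : ℕ) (g : Fin N → ℝ)
    (A : Matrix (Fin N) (Fin N) ℝ)
    (hA : ∀ i j, A i j = if i = j then 1 else g j) :
    A.det = 1 + ∑ s ∈ Finset.Icc 1 N, (-1 : ℝ) ^ (s - 1) * ((s : ℝ) - 1) *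
      ∑ S ∈ Finset.univ.powersetCard s, ∏ k ∈ S, g k := by
  have hA' : A = diagonal (fun i => 1 - g i) + replicateRow (Fin N) g := by
    ext i j
    by_cases h : i = j <;> simp [hA, h]
  rw [hA', det_diagonal_add_replicateRow, prod_one_sub_add_sum_mul_prod_erase_one_sub,
    Fintype.card_fin]

/-- determinant formula for `A_N = I_N + G_N`. -/
theorem det_A_formula (N : ℕ) (hN : 2 ≤ N) (g : Fin N → ℝ)
    (hg : ∀ i, g i ∈ Set.Ioo (0 : ℝ) 1)
    (A : Matrix (Fin N) (Fin N) ℝ)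
    (hA : ∀ i j, A i j = if i = j then 1 else g j) :
    A.det = 1 + ∑ s ∈ Finset.Icc 1 N, (-1 : ℝ) ^ (s - 1) * ((s : ℝ) - 1) *
      ∑ S ∈ Finset.univ.powersetCard s, ∏ k ∈ S, g k :=
  det_A_formula_general N g A hA
end

section
/- Fix any integer N ≥ 2 and reals g_1, …, g_N ∈ (0,1). Let A_N = I_N + G_N, where G_N is the N×N matrix with zero diagonal and off-diagonal entries [G_N]_{i,j} = g_j for i ≠ j. Then for every i ∈ {1,…,N}, the (i,i) entry of A_N⁻¹ satisfies [A_N⁻¹]_{i,i} · det(A_N) = 1 + Σ_{s=1}^{N−1} (−1)^{s−1} (s−1) Σ_{S ⊆ {1,…,N}∖{i}, |S| = s} Π_{k ∈ S} g_k, and [A_N⁻¹]_{i,i} > 0. -/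
/-!
Write `A = I + G = D + 𝟙 gᵀ` with `D = diag(1 - g)`. The matrix determinant lemma gives
`det A = ∏ₖ (1 - g k) + ∑ⱼ g j ∏_{k ≠ j} (1 - g k)`, which is positive for `g ∈ (0,1)ᴺ`, and
expanding the products turns it into `∑_S (-1)^|S| (1 - |S|) ∏_{k ∈ S} g k`. Since
`A⁻¹ i i * det A = adj(A) i i` is the principal minor obtained by deleting row and column `i`,
which is a matrix of the same shape built from the remaining `g k`, both claims follow.
-/

open Matrix Finset

namespace Finset

variable {α R : Type*} [CommRing R]

theorem sum_powerset_eq_one_add_sum_Icc_powersetCard (g : α → R) (T : Finset α) :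
    ∑ S ∈ T.powerset, (-1) ^ #S * (1 - #S : R) * ∏ k ∈ S, g k
      = 1 + ∑ s ∈ Icc 1 #T, (-1) ^ (s - 1) * ((s : R) - 1) *
          ∑ S ∈ T.powersetCard s, ∏ k ∈ S, g k := by
  rw [sum_powerset, range_eq_Ico, sum_eq_sum_Ico_succ_bot (by omega), zero_add,
    Ico_add_one_right_eq_Icc]
  refine congrArg₂ (· + ·) (by simp) (sum_congr rfl fun s hs => ?_)
  obtain ⟨t, rfl⟩ := Nat.exists_eq_add_one_of_ne_zero
    (Nat.one_le_iff_ne_zero.mp (mem_Icc.mp hs).1)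
  rw [mul_sum]
  refine sum_congr rfl fun S hS => ?_
  rw [(mem_powersetCard.mp hS).2]
  push_cast
  ring

variable [DecidableEq α]

theorem prod_one_sub_eq_sum_powerset_s12 (g : α → R) (T : Finset α) :
    ∏ k ∈ T, (1 - g k) = ∑ S ∈ T.powerset, (-1) ^ #S * ∏ k ∈ S, g k := by
  simpa using prod_sub (fun _ => (1 : R)) g T

theorem sum_powerset_neg_one_pow_mul_one_sub_card_mul_prod (g : α → R) (T : Finset α) :
    ∑ S ∈ T.powerset, (-1) ^ #S * (1 - #S : R) * ∏ k ∈ S, g k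
      = ∏ k ∈ T, (1 - g k) + ∑ j ∈ T, g j * ∏ k ∈ T.erase j, (1 - g k) := by
  induction T using Finset.induction with
  | empty => simp
  | @insert a T ha ih =>
    -- Both sides satisfy `F (insert a T) = (1 - g a) * F T + g a * ∏ k ∈ T, (1 - g k)`.
    have hnew : ∑ S ∈ T.powerset,
        (-1) ^ #(insert a S) * (1 - #(insert a S) : R) * ∏ k ∈ insert a S, g k
        = g a * (∏ k ∈ T, (1 - g k) -
          ∑ S ∈ T.powerset, (-1) ^ #S * (1 - #S : R) * ∏ k ∈ S, g k) := by
      rw [prod_one_sub_eq_sum_powerset_s12, ← sum_sub_distrib, mul_sum]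
      refine sum_congr rfl fun S hS => ?_
      have haS : a ∉ S := fun h => ha (mem_powerset.mp hS h)
      rw [card_insert_of_notMem haS, prod_insert haS]
      push_cast
      ring
    have herase : ∀ j ∈ T, g j * ∏ k ∈ (insert a T).erase j, (1 - g k)
        = (1 - g a) * (g j * ∏ k ∈ T.erase j, (1 - g k)) := fun j hj => by
      rw [erase_insert_of_ne (ne_of_mem_of_not_mem hj ha).symm,
        prod_insert fun h => ha (mem_of_mem_erase h)]
      ring
    rw [sum_powerset_insert ha, hnew, ih, prod_insert ha, sum_insert ha, erase_insert ha,
      sum_congr rfl herase, ← mul_sum]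
    ring

end Finset

theorem Fin.sum_powersetCard_univ_prod_succAbove {R : Type*} [CommRing R] {n : ℕ}
    (i : Fin (n + 1)) (g : Fin (n + 1) → R) (s : ℕ) :
    ∑ S ∈ (univ : Finset (Fin n)).powersetCard s, ∏ k ∈ S, g (i.succAbove k)
      = ∑ S ∈ (univ.erase i).powersetCard s, ∏ k ∈ S, g k := by
  have hmap : univ.map i.succAboveEmb = univ.erase i := by
    rw [Fin.univ_succAbove n i, erase_cons]
  rw [← hmap, powersetCard_map, sum_map]
  simp [prod_map]

namespace Matrix

section offDiagCol

variable {ι R : Type*} [DecidableEq ι]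

def offDiagCol [Zero R] (g : ι → R) : Matrix ι ι R :=
  of fun i j => if i = j then 0 else g j

theorem submatrix_one_add_offDiagCol [AddZeroClass R] [One R] {κ : Type*} [DecidableEq κ]
    (g : ι → R) {e : κ → ι} (he : Function.Injective e) :
    (1 + offDiagCol g).submatrix e e = 1 + offDiagCol (g ∘ e) := by
  ext i j
  simp [offDiagCol, one_apply, he.eq_iff]

theorem one_add_offDiagCol_eq [CommRing R] [Fintype ι] (g : ι → R) :
    1 + offDiagCol g = diagonal (1 - g) + replicateCol Unit (1 : ι → R) * replicateRow Unit g := by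
  ext i j
  by_cases h : i = j
  · subst h
    simp [offDiagCol, mul_apply]
  · simp [offDiagCol, h, one_apply_ne h, mul_apply]

variable [Fintype ι]

theorem det_one_add_offDiagCol {K : Type*} [Field K] (g : ι → K) (hg : ∀ j, g j ≠ 1) :
    (1 + offDiagCol g).det = ∏ k, (1 - g k) + ∑ j, g j * ∏ k ∈ univ.erase j, (1 - g k) := by
  have hD : ∀ j, 1 - g j ≠ 0 := fun j => sub_ne_zero.mpr (hg j).symm
  have hunit : IsUnit (diagonal (1 - g)).det := by
    simpa [det_diagonal, isUnit_iff_ne_zero, prod_ne_zero_iff] using hD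
  have hrank : (1 + replicateRow Unit g * (diagonal (1 - g))⁻¹ * replicateCol Unit (1 : ι → K)).det
      = 1 + ∑ j, g j / (1 - g j) := by
    have hinv : (diagonal (1 - g))⁻¹ = diagonal fun j => (1 - g j)⁻¹ := by
      refine inv_eq_left_inv ?_
      rw [diagonal_mul_diagonal, ← diagonal_one]
      exact congrArg diagonal (funext fun j => inv_mul_cancel₀ (hD j))
    simp [hinv, det_unique, mul_apply, diagonal_apply, div_eq_mul_inv]
  rw [one_add_offDiagCol_eq, det_add_replicateCol_mul_replicateRow hunit, hrank, det_diagonal]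
  simp only [Pi.sub_apply, Pi.one_apply, mul_add, mul_one, mul_sum]
  congr 1
  refine sum_congr rfl fun j _ => ?_
  rw [← mul_prod_erase univ (fun k => 1 - g k) (mem_univ j)]
  field_simp [hD j]

theorem det_one_add_offDiagCol_eq_sum_powerset {K : Type*} [Field K] (g : ι → K)
    (hg : ∀ j, g j ≠ 1) :
    (1 + offDiagCol g).det = ∑ S ∈ univ.powerset, (-1) ^ #S * (1 - #S : K) * ∏ k ∈ S, g k := by
  rw [det_one_add_offDiagCol g hg, sum_powerset_neg_one_pow_mul_one_sub_card_mul_prod]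

theorem det_one_add_offDiagCol_pos (g : ι → ℝ) (hg₀ : ∀ j, 0 ≤ g j) (hg₁ : ∀ j, g j < 1) :
    0 < (1 + offDiagCol g).det := by
  have hpos : ∀ j, 0 < 1 - g j := fun j => sub_pos.mpr (hg₁ j)
  rw [det_one_add_offDiagCol g fun j => (hg₁ j).ne]
  exact add_pos_of_pos_of_nonneg (prod_pos fun k _ => hpos k)
    (sum_nonneg fun j _ => mul_nonneg (hg₀ j) (prod_nonneg fun k _ => (hpos k).le))

end offDiagCol

theorem inv_apply_mul_det {ι R : Type*} [Fintype ι] [DecidableEq ι] [CommRing R]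
    {A : Matrix ι ι R} (h : IsUnit A.det) (i j : ι) : A⁻¹ i j * A.det = adjugate A i j := by
  rw [nonsing_inv_apply A h, smul_apply, smul_eq_mul, mul_right_comm, IsUnit.val_inv_mul, one_mul]

theorem adjugate_fin_succ_apply_self {R : Type*} [CommRing R] {n : ℕ}
    (A : Matrix (Fin (n + 1)) (Fin (n + 1)) R) (i : Fin (n + 1)) :
    adjugate A i i = (A.submatrix i.succAbove i.succAbove).det := by
  rw [adjugate_fin_succ_eq_det_submatrix, Even.neg_one_pow ⟨i, rfl⟩, one_mul]

end Matrix

theorem inv_A_diag_general (N : ℕ) (g : Fin N → ℝ)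
    (hg : ∀ i, g i ∈ Set.Ioo (0 : ℝ) 1)
    (A : Matrix (Fin N) (Fin N) ℝ)
    (hA : ∀ i j, A i j = if i = j then 1 else g j) :
    ∀ i : Fin N,
      (A⁻¹ i i * A.det = 1 + ∑ s ∈ Finset.Icc 1 (N - 1), (-1 : ℝ) ^ (s - 1) * ((s : ℝ) - 1) *
        ∑ S ∈ (Finset.univ.erase i).powersetCard s, ∏ k ∈ S, g k) ∧
      0 < A⁻¹ i i := by
  intro i
  obtain ⟨n, rfl⟩ := Nat.exists_eq_add_one_of_ne_zero i.pos.ne'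
  obtain rfl : A = 1 + offDiagCol g := by
    ext j k
    by_cases h : j = k <;> simp [hA, offDiagCol, h]
  have hdet := det_one_add_offDiagCol_pos g (fun j => (hg j).1.le) fun j => (hg j).2
  have hminor : (1 + offDiagCol g)⁻¹ i i * (1 + offDiagCol g).det
      = (1 + offDiagCol (g ∘ i.succAbove)).det := by
    rw [inv_apply_mul_det hdet.ne'.isUnit, adjugate_fin_succ_apply_self,
      submatrix_one_add_offDiagCol _ Fin.succAbove_right_injective]
  refine ⟨?_, ?_⟩
  · rw [hminor, det_one_add_offDiagCol_eq_sum_powerset (g ∘ i.succAbove) fun k => (hg _).2.ne,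
      sum_powerset_eq_one_add_sum_Icc_powersetCard, card_univ, Fintype.card_fin,
      Nat.add_sub_cancel]
    simp only [Function.comp_apply, Fin.sum_powersetCard_univ_prod_succAbove]
  · have hminor_pos := det_one_add_offDiagCol_pos (g ∘ i.succAbove)
      (fun k => (hg _).1.le) fun k => (hg _).2
    exact (mul_pos_iff_of_pos_right hdet).mp (hminor ▸ hminor_pos)

/-- diagonal entries of `A_N⁻¹`. -/
theorem inv_A_diag (N : ℕ) (hN : 2 ≤ N) (g : Fin N → ℝ)
    (hg : ∀ i, g i ∈ Set.Ioo (0 : ℝ) 1)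
    (A : Matrix (Fin N) (Fin N) ℝ)
    (hA : ∀ i j, A i j = if i = j then 1 else g j) :
    ∀ i : Fin N,
      (A⁻¹ i i * A.det = 1 + ∑ s ∈ Finset.Icc 1 (N - 1), (-1 : ℝ) ^ (s - 1) * ((s : ℝ) - 1) *
        ∑ S ∈ (Finset.univ.erase i).powersetCard s, ∏ k ∈ S, g k) ∧
      0 < A⁻¹ i i :=
  inv_A_diag_general N g hg A hA
end

section
/- Fix any integer N ≥ 2 and reals g_1, …, g_N ∈ (0,1). Let A_N = I_N + G_N, where G_N is the N×N matrix with zero diagonal and off-diagonal entries [G_N]_{i,j} = g_j for i ≠ j. Then for every i ∈ {1,…,N} and every j ∈ {1,…,N} with j ≠ i, the (i,j) entry of A_N⁻¹ equals [A_N⁻¹]_{i,j} = (1/det(A_N)) · (−1)^{N−1} · g_j · Π_{k ∈ {1,…,N}∖{i,j}} (g_k − 1), and [A_N⁻¹]_{i,j} < 0. -/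
/-!
Write `d = 1 - g`. Then `A = diagonal d + vecMulVec 1 g` is a diagonal matrix plus a rank-one
matrix. With `c = 1 + ∑ k, g k / d k > 0`, the Sherman–Morrison formula gives
`A⁻¹ i j = -g j / (c * d i * d j)` for `i ≠ j`, which is negative, and the matrix determinant
lemma gives `det A = c * ∏ k, d k`. Pulling `d i * d j` out of that product and turning the
remaining `N - 2` factors `1 - g k` into `g k - 1` produces the sign `(-1) ^ (N - 1)`.
-/

open Matrix Finset

namespace Matrix

variable {ι K : Type*} [Fintype ι] [DecidableEq ι] [Field K] {d : ι → K}

theorem diagonal_add_vecMulVec_eq_diagonal_mul (hd : ∀ i, d i ≠ 0) (u v : ι → K) :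
    diagonal d + vecMulVec u v = diagonal d * (1 + vecMulVec (u / d) v) := by
  rw [Matrix.mul_add, Matrix.mul_one, mul_vecMulVec]
  congr 2
  ext i
  simp [mulVec_diagonal, mul_div_cancel₀ _ (hd i)]

theorem det_diagonal_add_vecMulVec (hd : ∀ i, d i ≠ 0) (u v : ι → K) :
    (diagonal d + vecMulVec u v).det = (∏ i, d i) * (1 + v ⬝ᵥ (u / d)) := by
  rw [diagonal_add_vecMulVec_eq_diagonal_mul hd, det_mul, det_diagonal, vecMulVec_eq Unit,
    det_one_add_replicateCol_mul_replicateRow]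

theorem inv_diagonal_add_vecMulVec (hd : ∀ i, d i ≠ 0) (u v : ι → K)
    (hc : 1 + v ⬝ᵥ (u / d) ≠ 0) :
    (diagonal d + vecMulVec u v)⁻¹ =
      diagonal d⁻¹ - (1 + v ⬝ᵥ (u / d))⁻¹ • vecMulVec (u / d) (v / d) := by
  refine inv_eq_right_inv ?_
  have hdd : diagonal d * diagonal d⁻¹ = 1 := by
    rw [diagonal_mul_diagonal, ← diagonal_one]
    congr 1
    ext i
    simp [hd i]
  have hleft : diagonal d * vecMulVec (u / d) (v / d) = vecMulVec u (v / d) := by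
    rw [mul_vecMulVec]
    congr 1
    ext i
    simp [mulVec_diagonal, mul_div_cancel₀ _ (hd i)]
  have hright : vecMulVec u v * diagonal d⁻¹ = vecMulVec u (v / d) := by
    rw [vecMulVec_mul]
    congr 1
    ext i
    simp [vecMul_diagonal, div_eq_mul_inv]
  rw [Matrix.add_mul, Matrix.mul_sub, Matrix.mul_sub, Matrix.mul_smul, Matrix.mul_smul, hdd, hleft,
    hright, vecMulVec_mul_vecMulVec, vecMulVec_smul]
  set c := 1 + v ⬝ᵥ (u / d)
  rw [show v ⬝ᵥ (u / d) = c - 1 by ring, smul_smul, mul_sub, inv_mul_cancel₀ hc, mul_one,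
    sub_smul, one_smul]
  abel

end Matrix

theorem Finset.prod_one_sub_eq_neg_pow_mul_prod_erase_erase {ι R : Type*} [Fintype ι]
    [DecidableEq ι] [CommRing R] (x : ι → R) {i j : ι} (hji : j ≠ i) :
    ∏ k, (1 - x k) = -((-1) ^ (Fintype.card ι - 1) * (1 - x i) * (1 - x j) *
      ∏ k ∈ (univ.erase i).erase j, (x k - 1)) := by
  set s := (univ.erase i).erase j
  have hj : j ∈ univ.erase i := mem_erase.2 ⟨hji, mem_univ j⟩
  have hcard : #s + 2 = Fintype.card ι := by
    rw [card_erase_of_mem hj, card_erase_of_mem (mem_univ i), card_univ]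
    have := Fintype.one_lt_card_iff.2 ⟨i, j, hji.symm⟩
    omega
  have hneg : ∏ k ∈ s, (x k - 1) = (-1) ^ #s * ∏ k ∈ s, (1 - x k) := by
    rw [← prod_neg]
    simp only [neg_sub]
  have hsq : (-1 : R) ^ #s * (-1) ^ #s = 1 := by
    rw [← mul_pow]
    norm_num
  rw [← mul_prod_erase _ _ (mem_univ i), ← mul_prod_erase _ _ hj, hneg, ← hcard,
    show #s + 2 - 1 = #s + 1 by omega]
  linear_combination -(1 - x i) * (1 - x j) * (∏ k ∈ s, (1 - x k)) * hsq

theorem inv_A_offdiag_general (N : ℕ) (g : Fin N → ℝ)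
    (hg : ∀ i, g i ∈ Set.Ioo (0 : ℝ) 1)
    (A : Matrix (Fin N) (Fin N) ℝ)
    (hA : ∀ i j, A i j = if i = j then 1 else g j) :
    ∀ i j : Fin N, j ≠ i →
      (A⁻¹ i j = (1 / A.det) * (-1 : ℝ) ^ (N - 1) * g j *
        ∏ k ∈ (Finset.univ.erase i).erase j, (g k - 1)) ∧
      A⁻¹ i j < 0 := by
  intro i j hji
  set d : Fin N → ℝ := 1 - g with hd_def
  have hd : ∀ k, 0 < d k := fun k => sub_pos.2 (hg k).2
  set c := 1 + g ⬝ᵥ (1 / d) with hc_def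
  have hc : 0 < c := add_pos_of_pos_of_nonneg one_pos <|
    sum_nonneg fun k _ => mul_nonneg (hg k).1.le (one_div_pos.2 (hd k)).le
  have hA' : A = diagonal d + vecMulVec 1 g := by
    ext k l
    by_cases hkl : k = l <;> simp [hA, hkl, hd_def]
  have hentry : A⁻¹ i j = -(g j / (c * d i * d j)) := by
    rw [hA', inv_diagonal_add_vecMulVec (fun k => (hd k).ne') _ _ hc.ne', ← hc_def]
    simp only [Matrix.sub_apply, Matrix.smul_apply, diagonal_apply_ne _ hji.symm,
      vecMulVec_apply, Pi.div_apply, Pi.one_apply, smul_eq_mul, zero_sub]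
    field_simp
  have hdet : A.det = (∏ k, d k) * c := by
    rw [hA', det_diagonal_add_vecMulVec (fun k => (hd k).ne')]
  refine ⟨?_, ?_⟩
  · have hprod := prod_one_sub_eq_neg_pow_mul_prod_erase_erase g hji
    have hQ : ∏ k ∈ (univ.erase i).erase j, (g k - 1) ≠ 0 :=
      prod_ne_zero_iff.2 fun k _ => sub_ne_zero.2 (hg k).2.ne
    rw [hentry, hdet]
    simp only [hd_def, Pi.sub_apply, Pi.one_apply] at hprod ⊢
    rw [hprod, Fintype.card_fin]
    field_simp
  · rw [hentry]
    exact neg_neg_of_pos (div_pos (hg j).1 (mul_pos (mul_pos hc (hd i)) (hd j)))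

/-- off-diagonal entries of `A_N⁻¹`. -/
theorem inv_A_offdiag (N : ℕ) (hN : 2 ≤ N) (g : Fin N → ℝ)
    (hg : ∀ i, g i ∈ Set.Ioo (0 : ℝ) 1)
    (A : Matrix (Fin N) (Fin N) ℝ)
    (hA : ∀ i j, A i j = if i = j then 1 else g j) :
    ∀ i j : Fin N, j ≠ i →
      (A⁻¹ i j = (1 / A.det) * (-1 : ℝ) ^ (N - 1) * g j *
        ∏ k ∈ (Finset.univ.erase i).erase j, (g k - 1)) ∧
      A⁻¹ i j < 0 :=
  inv_A_offdiag_general N g hg A hA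
end

section
/- Fix any integer N ≥ 2 and reals g_1, …, g_N ∈ (0,1). Let A_N = I_N + G_N, where G_N is the N×N matrix with zero diagonal and off-diagonal entries [G_N]_{i,j} = g_j for i ≠ j. Then for every i ∈ {1,…,N}, the i-th row sum of A_N⁻¹ satisfies Σ_{j=1}^{N} [A_N⁻¹]_{i,j} = (1/det(A_N)) · Π_{k ∈ {1,…,N}∖{i}} (1 − g_k), and in particular this row sum is strictly positive. -/
/-!
Write `A = D + 𝟙 gᵀ` with `D = diag(1 - g_k)`. The row sums of `A⁻¹` form the vector `A⁻¹ 𝟙`,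
and one checks directly that `A x = 𝟙` for `x_k = (1 - g_k)⁻¹ / (1 + ∑ g_j / (1 - g_j))`.
By the matrix determinant lemma `det A = ∏ (1 - g_k) · (1 + ∑ g_j / (1 - g_j))`, so
`x_i = ∏_{k ≠ i} (1 - g_k) / det A`, which is positive because every factor is.
-/

open Matrix Finset

namespace Matrix

variable {ι K : Type*} [Fintype ι] [DecidableEq ι] [Field K] {d : ι → K}

theorem sum_inv_apply_eq_of_mulVec_eq_one {A : Matrix ι ι K} (hA : IsUnit A.det) {x : ι → K}
    (h : A *ᵥ x = 1) (i : ι) : ∑ j, A⁻¹ i j = x i := by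
  have : A⁻¹ *ᵥ 1 = x := by
    rw [← h, mulVec_mulVec, nonsing_inv_mul A hA, one_mulVec]
  simpa [mulVec, dotProduct] using congrFun this i

theorem diagonal_add_vecMulVec_one_eq_diagonal_mul (hd : ∀ k, d k ≠ 0) (g : ι → K) :
    diagonal d + vecMulVec 1 g = diagonal d * (1 + vecMulVec d⁻¹ g) := by
  ext i j
  simp [diagonal_apply, vecMulVec_apply, mul_add, one_apply, hd i]

theorem det_diagonal_add_vecMulVec_one (hd : ∀ k, d k ≠ 0) (g : ι → K) :
    (diagonal d + vecMulVec 1 g).det = (∏ k, d k) * (1 + ∑ k, g k / d k) := by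
  rw [diagonal_add_vecMulVec_one_eq_diagonal_mul hd, det_mul, det_diagonal, vecMulVec_eq (Fin 1),
    det_one_add_replicateCol_mul_replicateRow]
  simp [dotProduct, div_eq_mul_inv]

theorem diagonal_add_vecMulVec_one_mulVec (hd : ∀ k, d k ≠ 0) {g : ι → K}
    (hS : 1 + ∑ k, g k / d k ≠ 0) :
    (diagonal d + vecMulVec 1 g) *ᵥ (fun k => (d k)⁻¹ / (1 + ∑ k, g k / d k)) = 1 := by
  set S := 1 + ∑ k, g k / d k
  have hsum : ∑ k, g k * ((d k)⁻¹ / S) = (S - 1) / S := by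
    rw [show S - 1 = ∑ k, g k / d k from add_sub_cancel_left _ _, sum_div]
    exact sum_congr rfl fun k _ => by ring
  ext i
  simp only [add_mulVec, Pi.add_apply, mulVec_diagonal, vecMulVec_mulVec, dotProduct, hsum,
    Pi.smul_apply, Pi.one_apply, op_smul_eq_mul]
  field_simp [hd i]
  ring

theorem sum_inv_diagonal_add_vecMulVec_one_apply (hd : ∀ k, d k ≠ 0) {g : ι → K}
    (hS : 1 + ∑ k, g k / d k ≠ 0) (i : ι) :
    ∑ j, (diagonal d + vecMulVec 1 g : Matrix ι ι K)⁻¹ i j =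
      (∏ k ∈ univ.erase i, d k) / (diagonal d + vecMulVec 1 g).det := by
  have hdet := det_diagonal_add_vecMulVec_one hd g
  have hunit : IsUnit (diagonal d + vecMulVec 1 g).det :=
    hdet ▸ (mul_ne_zero (prod_ne_zero_iff.mpr fun k _ => hd k) hS).isUnit
  have hprod : ∏ k ∈ univ.erase i, d k ≠ 0 := prod_ne_zero_iff.mpr fun k _ => hd k
  rw [sum_inv_apply_eq_of_mulVec_eq_one hunit (diagonal_add_vecMulVec_one_mulVec hd hS) i, hdet,
    ← mul_prod_erase univ d (mem_univ i)]
  field_simp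

end Matrix

theorem inv_A_row_sum_general (N : ℕ) (g : Fin N → ℝ)
    (hg : ∀ i, g i ∈ Set.Ioo (0 : ℝ) 1)
    (A : Matrix (Fin N) (Fin N) ℝ)
    (hA : ∀ i j, A i j = if i = j then 1 else g j) :
    ∀ i : Fin N,
      (∑ j : Fin N, A⁻¹ i j = (1 / A.det) * ∏ k ∈ Finset.univ.erase i, (1 - g k)) ∧
      0 < ∑ j : Fin N, A⁻¹ i j := by
  have hd : ∀ k, 0 < 1 - g k := fun k => sub_pos.mpr (hg k).2
  have hS : 0 < 1 + ∑ k, g k / (1 - g k) :=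
    add_pos_of_pos_of_nonneg one_pos (sum_nonneg fun k _ => div_nonneg (hg k).1.le (hd k).le)
  have hA_eq : A = diagonal (fun k => 1 - g k) + vecMulVec 1 g := by
    ext i j
    by_cases h : i = j <;> simp [hA, h]
  have hdet : 0 < A.det := by
    rw [hA_eq, det_diagonal_add_vecMulVec_one fun k => (hd k).ne']
    exact mul_pos (prod_pos fun k _ => hd k) hS
  intro i
  subst hA_eq
  rw [sum_inv_diagonal_add_vecMulVec_one_apply (fun k => (hd k).ne') hS.ne' i, one_div_mul_eq_div]
  exact ⟨rfl, div_pos (prod_pos fun k _ => hd k) hdet⟩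

/-- row sums of `A_N⁻¹`. -/
theorem inv_A_row_sum (N : ℕ) (hN : 2 ≤ N) (g : Fin N → ℝ)
    (hg : ∀ i, g i ∈ Set.Ioo (0 : ℝ) 1)
    (A : Matrix (Fin N) (Fin N) ℝ)
    (hA : ∀ i j, A i j = if i = j then 1 else g j) :
    ∀ i : Fin N,
      (∑ j : Fin N, A⁻¹ i j = (1 / A.det) * ∏ k ∈ Finset.univ.erase i, (1 - g k)) ∧
      0 < ∑ j : Fin N, A⁻¹ i j :=
  inv_A_row_sum_general N g hg A hA
end

section
/- Fix any integer N ≥ 2 and reals g_1, …, g_N ∈ (0,1). Let A_N = I_N + G_N, where G_N is the N×N matrix with zero diagonal and off-diagonal entries [G_N]_{i,j} = g_j for i ≠ j. Then for every i ∈ {1,…,N}, one has [A_N⁻¹]_{i,i} − 1/(1 − g_i) = −g_i · Π_{k ∈ {1,…,N}∖{i}} (1 − g_k) / (det(A_N)·(1 − g_i)); in particular [A_N⁻¹]_{i,i} < 1/(1 − g_i). -/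
/-!
Writing `d k = 1 - g k`, the matrix is `A = diagonal d + 𝟙 gᵀ`, a rank-one update of a positive
diagonal matrix. With `S = ∑ k, g k / (1 - g k) ≥ 0`, the matrix determinant lemma gives
`det A = (∏ k, (1 - g k)) (1 + S)` and the Sherman–Morrison (Woodbury) formula gives
`A⁻¹ i i = 1 / (1 - g i) - g i / ((1 - g i)² (1 + S))`; the correction term is negative.
-/

open Matrix Finset

section RankOneUpdate

variable {K n : Type*} [Field K] [Fintype n] [DecidableEq n]

theorem inv_diagonal_of_ne_zero {d : n → K} (hd : ∀ k, d k ≠ 0) :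
    (diagonal d)⁻¹ = diagonal d⁻¹ :=
  inv_eq_right_inv <| by
    rw [diagonal_mul_diagonal, ← diagonal_one]
    exact congrArg diagonal (funext fun k => mul_inv_cancel₀ (hd k))

variable (d u v : n → K)

theorem replicateRow_mul_inv_diagonal_mul_replicateCol (hd : ∀ k, d k ≠ 0) :
    replicateRow Unit v * (diagonal d)⁻¹ * replicateCol Unit u =
      diagonal fun _ => ∑ k, v k * u k / d k := by
  ext
  simp [inv_diagonal_of_ne_zero hd, mul_apply, diagonal_apply, div_eq_mul_inv, mul_right_comm]

theorem det_diagonal_add_replicateCol_mul_replicateRow (hd : ∀ k, d k ≠ 0) :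
    (diagonal d + replicateCol Unit u * replicateRow Unit v).det =
      (∏ k, d k) * (1 + ∑ k, v k * u k / d k) := by
  have hD : IsUnit (diagonal d).det := by
    simpa [det_diagonal] using prod_ne_zero_iff.mpr fun k _ => hd k
  rw [det_add_replicateCol_mul_replicateRow hD, det_diagonal,
    replicateRow_mul_inv_diagonal_mul_replicateCol _ _ _ hd, ← diagonal_one, diagonal_add,
    det_diagonal]
  simp

theorem inv_diagonal_add_replicateCol_mul_replicateRow_apply (hd : ∀ k, d k ≠ 0)
    (hs : 1 + ∑ k, v k * u k / d k ≠ 0) (i j : n) :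
    (diagonal d + replicateCol Unit u * replicateRow Unit v)⁻¹ i j =
      diagonal d⁻¹ i j - u i * v j / (d i * d j * (1 + ∑ k, v k * u k / d k)) := by
  have hD : IsUnit (diagonal d) := by
    rw [isUnit_iff_isUnit_det]
    simpa [det_diagonal] using prod_ne_zero_iff.mpr fun k _ => hd k
  have hC : 1⁻¹ + replicateRow Unit v * (diagonal d)⁻¹ * replicateCol Unit u =
      diagonal fun _ => 1 + ∑ k, v k * u k / d k := by
    rw [replicateRow_mul_inv_diagonal_mul_replicateCol _ _ _ hd, inv_one, ← diagonal_one,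
      diagonal_add]
  rw [← Matrix.mul_one (replicateCol Unit u), add_mul_mul_inv_eq_sub _ _ _ _ hD isUnit_one, hC,
    inv_diagonal_of_ne_zero (fun _ => hs), inv_diagonal_of_ne_zero hd]
  · simp [mul_apply, diagonal_apply, div_eq_mul_inv]
    ring
  · rw [hC, isUnit_iff_isUnit_det, det_diagonal]
    simpa using hs

end RankOneUpdate

theorem eq_diagonal_add_replicateCol_mul_replicateRow {R n : Type*} [Ring R] [DecidableEq n]
    (g : n → R) (A : Matrix n n R) (hA : ∀ i j, A i j = if i = j then 1 else g j) :
    A = diagonal (fun k => 1 - g k) +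
      replicateCol Unit (fun _ => (1 : R)) * replicateRow Unit g := by
  ext i j
  by_cases h : i = j
  · subst h; simp [hA, mul_apply]
  · simp [hA, h, mul_apply]

theorem inv_A_diag_lt_general (N : ℕ) (g : Fin N → ℝ)
    (hg : ∀ i, g i ∈ Set.Ioo (0 : ℝ) 1)
    (A : Matrix (Fin N) (Fin N) ℝ)
    (hA : ∀ i j, A i j = if i = j then 1 else g j) :
    ∀ i : Fin N,
      (A⁻¹ i i - 1 / (1 - g i) =
        -g i * (∏ k ∈ Finset.univ.erase i, (1 - g k)) / (A.det * (1 - g i))) ∧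
      A⁻¹ i i < 1 / (1 - g i) := by
  intro i
  have hd : ∀ k, 0 < 1 - g k := fun k => sub_pos.mpr (hg k).2
  set S := ∑ k, g k / (1 - g k)
  have hS : 0 < 1 + S := by
    have : 0 ≤ S := sum_nonneg fun k _ => div_nonneg (hg k).1.le (hd k).le
    linarith
  set P := ∏ k ∈ univ.erase i, (1 - g k)
  have hP : 0 < P := prod_pos fun k _ => hd k
  have hA' := eq_diagonal_add_replicateCol_mul_replicateRow g A hA
  have hdet : A.det = (1 - g i) * P * (1 + S) := by
    rw [hA', det_diagonal_add_replicateCol_mul_replicateRow _ _ g fun k => (hd k).ne',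
      ← mul_prod_erase _ _ (mem_univ i)]
    simp only [mul_one, S, P]
  have hinv : A⁻¹ i i = 1 / (1 - g i) - g i / ((1 - g i) * (1 - g i) * (1 + S)) := by
    rw [hA', inv_diagonal_add_replicateCol_mul_replicateRow_apply _ _ g
      (fun k => (hd k).ne') (by simpa [S] using hS.ne') i i]
    simp [S]
  have hdiff : A⁻¹ i i - 1 / (1 - g i) = -g i * P / (A.det * (1 - g i)) := by
    rw [hinv, hdet]
    field_simp
    ring
  refine ⟨hdiff, sub_neg.mp (hdiff ▸ ?_)⟩
  have hgi := (hg i).1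
  have hdi := hd i
  rw [hdet, neg_mul, neg_div, neg_lt_zero]
  positivity

/-- comparison of diagonal entries of `A_N⁻¹` with `1/(1 − g_i)`. -/
theorem inv_A_diag_lt (N : ℕ) (hN : 2 ≤ N) (g : Fin N → ℝ)
    (hg : ∀ i, g i ∈ Set.Ioo (0 : ℝ) 1)
    (A : Matrix (Fin N) (Fin N) ℝ)
    (hA : ∀ i j, A i j = if i = j then 1 else g j) :
    ∀ i : Fin N,
      (A⁻¹ i i - 1 / (1 - g i) =
        -g i * (∏ k ∈ Finset.univ.erase i, (1 - g k)) / (A.det * (1 - g i))) ∧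
      A⁻¹ i i < 1 / (1 - g i) :=
  inv_A_diag_lt_general N g hg A hA
end

section
/- Fix any integer N ≥ 2 and a real ḡ > 0 with (N−1)·ḡ < 1. Let f_1, …, f_N : ℝ → ℝ be functions each of which is Lipschitz with constant ḡ, i.e., |f_j(a) − f_j(b)| ≤ ḡ·|a − b| for all reals a, b. Define F : ℝ^N → ℝ^N by F_i(y) = y_i + Σ_{j ≠ i} f_j(y_j). Then for all y, y' ∈ ℝ^N, the inner product ⟨y − y', F(y) − F(y')⟩ is at least (1 − (N−1)·ḡ)·‖y − y'‖², where ‖·‖ is the Euclidean norm; in particular F is strongly monotone. -/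
/-!
Write `d = y - y'` and `e_j = f_j(y_j) - f_j(y'_j)`, so `|e_j| ≤ ḡ |d_j|` and
`F y - F y' = d + E` with `E_i = ∑_{j ≠ i} e_j`. Then `⟨d, F y - F y'⟩ = ‖d‖² + ⟨d, E⟩`, and the
cross term is bounded below by `-ḡ ∑_{i ≠ j} |d_i| |d_j| = -ḡ ((∑ |d_i|)² - ‖d‖²)`, which by
Cauchy–Schwarz is at least `-(N - 1) ḡ ‖d‖²`.
-/

open Finset

variable {ι : Type*} [Fintype ι] [DecidableEq ι]

theorem sum_sum_erase_mul_le (a : ι → ℝ) :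
    ∑ i, ∑ j ∈ univ.erase i, a i * a j ≤ ((Fintype.card ι : ℝ) - 1) * ∑ i, a i ^ 2 := by
  have hoff : ∑ i, ∑ j ∈ univ.erase i, a i * a j = (∑ i, a i) ^ 2 - ∑ i, a i ^ 2 := by
    simp only [← mul_sum, sum_erase_eq_sub (mem_univ _), sum_sub_distrib, ← sum_mul, sq]
  have hcs := sq_sum_le_card_mul_sum_sq (s := univ) (f := a)
  rw [card_univ] at hcs
  linarith

theorem neg_mul_norm_sq_le_inner_sum_erase {g : ℝ} (hg : 0 ≤ g) (d : EuclideanSpace ℝ ι)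
    (e : ι → ℝ) (he : ∀ j, |e j| ≤ g * |d j|) :
    -(((Fintype.card ι : ℝ) - 1) * g * ‖d‖ ^ 2) ≤
      inner ℝ d (WithLp.toLp 2 fun i => ∑ j ∈ univ.erase i, e j) := by
  have hterm : ∀ i j, -(g * (|d i| * |d j|)) ≤ d i * e j := fun i j =>
    calc -(g * (|d i| * |d j|)) = -(|d i| * (g * |d j|)) := by ring
      _ ≤ -(|d i| * |e j|) := neg_le_neg (mul_le_mul_of_nonneg_left (he j) (abs_nonneg _))
      _ = -|d i * e j| := by rw [abs_mul]
      _ ≤ d i * e j := neg_abs_le _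
  have hcross := mul_le_mul_of_nonneg_left (sum_sum_erase_mul_le fun i => |d i|) hg
  simp only [sq_abs, ← EuclideanSpace.real_norm_sq_eq] at hcross
  calc -(((Fintype.card ι : ℝ) - 1) * g * ‖d‖ ^ 2)
      ≤ -(g * ∑ i, ∑ j ∈ univ.erase i, |d i| * |d j|) := by linarith
    _ = ∑ i, ∑ j ∈ univ.erase i, -(g * (|d i| * |d j|)) := by
        simp only [sum_neg_distrib, mul_sum]
    _ ≤ ∑ i, ∑ j ∈ univ.erase i, d i * e j := by gcongr with i _ j _; exact hterm i j
    _ = inner ℝ d (WithLp.toLp 2 fun i => ∑ j ∈ univ.erase i, e j) := by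
        simp only [PiLp.inner_apply, RCLike.inner_apply, conj_trivial, sum_mul, mul_comm]

theorem strongly_monotone_F_general (N : ℕ) (gbar : ℝ) (hgbar : 0 < gbar)
    (hsmall : ((N : ℝ) - 1) * gbar < 1)
    (f : Fin N → ℝ → ℝ)
    (hf : ∀ j : Fin N, ∀ a b : ℝ, |f j a - f j b| ≤ gbar * |a - b|)
    (F : EuclideanSpace ℝ (Fin N) → EuclideanSpace ℝ (Fin N))
    (hF : ∀ y : EuclideanSpace ℝ (Fin N), ∀ i : Fin N,
      F y i = y i + ∑ j ∈ Finset.univ.erase i, f j (y j)) :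
    (∀ y y' : EuclideanSpace ℝ (Fin N),
      (1 - ((N : ℝ) - 1) * gbar) * ‖y - y'‖ ^ 2 ≤ inner ℝ (y - y') (F y - F y')) ∧
    ∃ c : ℝ, 0 < c ∧ ∀ y y' : EuclideanSpace ℝ (Fin N),
      c * ‖y - y'‖ ^ 2 ≤ inner ℝ (y - y') (F y - F y') := by
  have key : ∀ y y' : EuclideanSpace ℝ (Fin N),
      (1 - ((N : ℝ) - 1) * gbar) * ‖y - y'‖ ^ 2 ≤ inner ℝ (y - y') (F y - F y') := by
    intro y y'
    have hdiff : F y - F y' = (y - y') +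
        WithLp.toLp 2 fun i => ∑ j ∈ univ.erase i, (f j (y j) - f j (y' j)) := by
      ext i
      simp only [PiLp.sub_apply, PiLp.add_apply, hF, sum_sub_distrib]
      ring
    have hcross := neg_mul_norm_sq_le_inner_sum_erase hgbar.le (y - y')
      (fun j => f j (y j) - f j (y' j)) fun j => hf j (y j) (y' j)
    rw [Fintype.card_fin] at hcross
    rw [hdiff, inner_add_right, real_inner_self_eq_norm_sq]
    linarith
  exact ⟨key, 1 - ((N : ℝ) - 1) * gbar, by linarith, key⟩

/-- strong monotonicity of `F_i(y) = y_i + Σ_{j ≠ i} f_j(y_j)` when each `f_j`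
is Lipschitz with constant `ḡ` and `(N−1)·ḡ < 1`. -/
theorem strongly_monotone_F (N : ℕ) (hN : 2 ≤ N) (gbar : ℝ) (hgbar : 0 < gbar)
    (hsmall : ((N : ℝ) - 1) * gbar < 1)
    (f : Fin N → ℝ → ℝ)
    (hf : ∀ j : Fin N, ∀ a b : ℝ, |f j a - f j b| ≤ gbar * |a - b|)
    (F : EuclideanSpace ℝ (Fin N) → EuclideanSpace ℝ (Fin N))
    (hF : ∀ y : EuclideanSpace ℝ (Fin N), ∀ i : Fin N,
      F y i = y i + ∑ j ∈ Finset.univ.erase i, f j (y j)) :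
    (∀ y y' : EuclideanSpace ℝ (Fin N),
      (1 - ((N : ℝ) - 1) * gbar) * ‖y - y'‖ ^ 2 ≤ inner ℝ (y - y') (F y - F y')) ∧
    ∃ c : ℝ, 0 < c ∧ ∀ y y' : EuclideanSpace ℝ (Fin N),
      c * ‖y - y'‖ ^ 2 ≤ inner ℝ (y - y') (F y - F y') :=
  strongly_monotone_F_general N gbar hgbar hsmall f hf F hF
end
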